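/- Let A_0 ⊆ A_1 ⊆ … ⊆ A_{n-1} ⊆ B be a chain of fields and let T_n = A_0 + A_1X + … + A_{n-1}X^{n-1} + X^nB[X]. Then every nonzero prime ideal of T_n is a maximal ideal. -/

import Mathlib

/-- The polynomial composite `T_n = A_0 + A_1·X + … + A_{n-1}·X^{n-1} + X^n·B[X]` attached to a
monotone chain `A : ℕ → Subring B`: the subring of `B[X]` of polynomials whose `i`-th
coefficient lies in `A i` for every `i < n`. -/
def compositeChain {B : Type*} [CommRing B] (n : ℕ) (A : ℕ → Subring B) (hA : Monotone A) :
    Subring (Polynomial B) where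
  carrier := {f : Polynomial B | ∀ i < n, f.coeff i ∈ A i}
  mul_mem' {f g} hf hg := by
    intro i hi
    rw [Polynomial.coeff_mul]
    refine sum_mem fun x hx => ?_
    rw [Finset.HasAntidiagonal.mem_antidiagonal] at hx
    have h1 : x.1 ≤ i := by omega
    have h2 : x.2 ≤ i := by omega
    exact mul_mem (hA h1 (hf x.1 (lt_of_le_of_lt h1 hi)))
      (hA h2 (hg x.2 (lt_of_le_of_lt h2 hi)))
  one_mem' := by
    intro i hi
    rw [Polynomial.coeff_one]
    split
    · exact one_mem _
    · exact zero_mem _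
  add_mem' {f g} hf hg := by
    intro i hi
    rw [Polynomial.coeff_add]
    exact add_mem (hf i hi) (hg i hi)
  zero_mem' := by
    intro i hi
    rw [Polynomial.coeff_zero]
    exact zero_mem _
  neg_mem' {f} hf := by
    intro i hi
    rw [Polynomial.coeff_neg]
    exact neg_mem (hf i hi)

theorem mem_compositeChain {B : Type*} [CommRing B] (n : ℕ) (A : ℕ → Subring B)
    (hA : Monotone A) (f : Polynomial B) :
    f ∈ compositeChain n A hA ↔ ∀ i < n, f.coeff i ∈ A i := Iff.rfl

/-! Let `𝔠 = {s ∈ T_n | s·B[X] ⊆ T_n}` be the conductor of `T_n` in `B[X]`; it contains `X^n B[X]`.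
If a prime `P` contains `𝔠`, it contains every `f` with `f(0) = 0`, because `f^n ∈ X^n B[X]`; so
`P` is the kernel of `f ↦ f(0) ∈ A_0`, which is maximal. Otherwise pick `s ∈ 𝔠 \ P`: then
`Q = {g ∈ B[X] | s g ∈ P}` is a prime of `B[X]` contracting to `P`, nonzero since `P` is, hence
maximal as `B[X]` is a PID; and `T_n → B[X]/Q` is onto, since `g ≡ s·(s⁻¹g)` modulo `Q` with
`s·(s⁻¹g) ∈ T_n`. Thus `T_n/P ≅ B[X]/Q` is a field. -/

open Polynomial

section Conductor

variable {R : Type*} [CommRing R] {T : Subring R} {s : T}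

theorem Ideal.exists_isPrime_comap_subtype_eq_of_mul_mem (hsT : ∀ r : R, ↑s * r ∈ T)
    (P : Ideal T) [hP : P.IsPrime] (hs : s ∉ P) :
    ∃ Q : Ideal R, Q.IsPrime ∧ Q.comap T.subtype = P := by
  let ι : R → T := fun g => ⟨s * g, hsT g⟩
  have hι_mul (g h : R) : ι (g * h) ∈ P ↔ ι g * ι h ∈ P := by
    have hsg : s * ι (g * h) = ι g * ι h :=
      Subtype.ext (by simp only [ι, Subring.coe_mul]; ring)
    rw [← hsg, hP.mul_mem_iff_mem_or_mem, or_iff_right hs]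
  refine ⟨{ carrier := {g | ι g ∈ P}, add_mem' := ?_, zero_mem' := ?_, smul_mem' := ?_ }, ?_, ?_⟩
  · intro g h hg hh
    show ι (g + h) ∈ P
    rw [show ι (g + h) = ι g + ι h from Subtype.ext (mul_add _ _ _)]
    exact P.add_mem hg hh
  · show ι 0 ∈ P
    rw [show ι 0 = 0 from Subtype.ext (mul_zero (s : R))]
    exact P.zero_mem
  · intro c g hg
    exact (hι_mul c g).2 (P.mul_mem_left _ hg)
  · refine ⟨fun htop => hs ?_, fun {g h} hgh => hP.mem_or_mem ((hι_mul g h).1 hgh)⟩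
    simpa [ι] using (Ideal.eq_top_iff_one _).1 htop
  · ext t
    change s * t ∈ P ↔ t ∈ P
    rw [hP.mul_mem_iff_mem_or_mem, or_iff_right hs]

theorem Ideal.isMaximal_comap_subtype_of_mul_mem (hsT : ∀ r : R, ↑s * r ∈ T)
    (Q : Ideal R) [Q.IsMaximal] (hs : ↑s ∉ Q) : (Q.comap T.subtype).IsMaximal := by
  let := Ideal.Quotient.field Q
  have hsurj : Function.Surjective ((Ideal.Quotient.mk Q).comp T.subtype) := by
    intro y
    obtain ⟨g, rfl⟩ := Ideal.Quotient.mk_surjective y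
    obtain ⟨β, hβ⟩ := Ideal.Quotient.mk_surjective (Ideal.Quotient.mk Q s)⁻¹
    have hs0 : Ideal.Quotient.mk Q s ≠ 0 := by rwa [Ne, Ideal.Quotient.eq_zero_iff_mem]
    refine ⟨⟨s * (β * g), hsT _⟩, ?_⟩
    simp [hβ, ← mul_assoc, mul_inv_cancel₀ hs0]
  simpa only [← RingHom.comap_ker, Ideal.mk_ker] using RingHom.ker_isMaximal_of_surjective _ hsurj

end Conductor

namespace compositeChain

section CommRing

variable {B : Type*} [CommRing B] (n : ℕ) {A : ℕ → Subring B} (hA : Monotone A)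

theorem X_pow_mul_mem (g : B[X]) : X ^ n * g ∈ compositeChain n A hA := by
  intro i hi
  rw [coeff_X_pow_mul', if_neg (by omega)]
  exact zero_mem _

theorem C_mem {a : B} (ha : a ∈ A 0) : C a ∈ compositeChain n A hA := by
  intro i _
  rw [coeff_C]
  split_ifs with h
  · exact h ▸ ha
  · exact zero_mem _

end CommRing

variable {B : Type*} [Field B] {n : ℕ} {A : ℕ → Subfield B} {hA : Monotone A}

theorem isMaximal_of_conductor_le (hn : 0 < n)
    (P : Ideal (compositeChain n (fun i => (A i).toSubring) hA)) [hP : P.IsPrime]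
    (hconductor : ∀ s : compositeChain n (fun i => (A i).toSubring) hA,
      (∀ r : B[X], ↑s * r ∈ compositeChain n (fun i => (A i).toSubring) hA) → s ∈ P) :
    P.IsMaximal := by
  let φ := (constantCoeff.comp (Subring.subtype _)).codRestrict (A 0)
    fun f : compositeChain n (fun i => (A i).toSubring) hA => f.2 0 hn
  have hφ : Function.Surjective φ := fun a => ⟨⟨C a, C_mem n hA a.2⟩, Subtype.ext coeff_C_zero⟩
  have hker : RingHom.ker φ ≤ P := by
    intro f hf
    obtain ⟨u, hu⟩ := X_dvd_iff.2 (congrArg Subtype.val hf)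
    refine hP.mem_of_pow_mem n (hconductor _ fun r => ?_)
    simpa [show (f : B[X]) = X * u from hu, mul_pow, mul_assoc] using X_pow_mul_mem n hA (u ^ n * r)
  have hmax := RingHom.ker_isMaximal_of_surjective φ hφ
  exact hmax.eq_of_le hP.ne_top hker ▸ hmax

end compositeChain

/-- For a chain of fields `A_0 ⊆ … ⊆ A_{n-1} ⊆ B` and
`T_n = A_0 + A_1·X + … + A_{n-1}·X^{n-1} + X^n·B[X]`, every nonzero prime ideal of `T_n`
is maximal. -/
theorem compositeChain_prime_isMaximal {B : Type*} [Field B]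
    (n : ℕ) (hn : 0 < n) (A : ℕ → Subfield B) (hA : Monotone A)
    (P : Ideal (compositeChain n (fun i => (A i).toSubring)
      (fun _ _ h _ hx => hA h hx)))
    (hP : P.IsPrime) (hne : P ≠ ⊥) :
    P.IsMaximal := by
  let T := compositeChain n (fun i => (A i).toSubring) fun _ _ h _ hx => hA h hx
  by_cases hconductor : ∀ s : T, (∀ r : B[X], ↑s * r ∈ T) → s ∈ P
  · exact compositeChain.isMaximal_of_conductor_le hn P hconductor
  push Not at hconductor
  obtain ⟨s, hsT, hs⟩ := hconductor
  obtain ⟨Q, hQ, rfl⟩ := Ideal.exists_isPrime_comap_subtype_eq_of_mul_mem hsT P hs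
  have hQ_ne_bot : Q ≠ ⊥ := by
    rintro rfl
    exact hne (Ideal.comap_bot_of_injective _ Subtype.val_injective)
  have := IsPrime.to_maximal_ideal hQ_ne_bot
  exact Ideal.isMaximal_comap_subtype_of_mul_mem hsT Q hs
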